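/- arXiv:2604.13134 — 2 statements merged into one kernel-verified Lean document; each statement's English description precedes it below -/
import Mathlib

section
/- For any real constants d₁, d₂ ≥ 0 with d₁² + d₂² > 0, the supremum over x ∈ ℝ of |d₁ − d₂ x| φ(x), where φ is the standard normal density, equals ((d₁ + √(d₁² + 4d₂²)) / (2√(2π))) · exp(−(d₁ − √(d₁² + 4d₂²))² / (8 d₂²)) when d₂ > 0, and equals d₁/√(2π) when d₂ = 0. -/
open Real

/-- The standard normal density. -/
noncomputable def gaussPdf (x : ℝ) : ℝ := (Real.sqrt (2 * Real.pi))⁻¹ * Real.exp (-x ^ 2 / 2)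

set_option maxHeartbeats 1000000 in
theorem stmt_11 (d1 d2 : ℝ) (h1 : 0 ≤ d1) (h2 : 0 ≤ d2) (hpos : 0 < d1 ^ 2 + d2 ^ 2) :
    (0 < d2 →
      (⨆ x : ℝ, |d1 - d2 * x| * gaussPdf x)
        = (d1 + Real.sqrt (d1 ^ 2 + 4 * d2 ^ 2)) / (2 * Real.sqrt (2 * Real.pi))
            * Real.exp (-(d1 - Real.sqrt (d1 ^ 2 + 4 * d2 ^ 2)) ^ 2 / (8 * d2 ^ 2)))
    ∧ (d2 = 0 →
      (⨆ x : ℝ, |d1 - d2 * x| * gaussPdf x) = d1 / Real.sqrt (2 * Real.pi)) := by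
  have hπ : 0 < Real.sqrt (2 * Real.pi) := Real.sqrt_pos.2 (by positivity)
  constructor
  · intro hd2
    set s : ℝ := Real.sqrt (d1 ^ 2 + 4 * d2 ^ 2) with hsdef
    have hs2 : s ^ 2 = d1 ^ 2 + 4 * d2 ^ 2 := Real.sq_sqrt (by positivity)
    have hs0 : 0 < s := Real.sqrt_pos.2 (by positivity)
    have hd1s : 0 < d1 + s := by linarith
    set x0 : ℝ := (d1 - s) / (2 * d2) with hx0def
    have h2d2x0 : 2 * d2 * x0 = d1 - s := by
      rw [hx0def]
      field_simp [hd2.ne']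
    have h4 : (2 * d2 * x0) ^ 2 = (d1 - s) ^ 2 := by rw [h2d2x0]
    have hexp : -x0 ^ 2 / 2 = -(d1 - s) ^ 2 / (8 * d2 ^ 2) := by
      rw [div_eq_div_iff (by norm_num : (2:ℝ) ≠ 0) (by positivity : (8 * d2 ^ 2 : ℝ) ≠ 0)]
      linear_combination (-2 : ℝ) * h4
    have hsx0 : (d1 + s) * x0 = -2 * d2 := by
      rw [hx0def]
      field_simp
      linear_combination -hs2
    have hsx0sq : (d1 + s) * x0 ^ 2 = -2 * d2 * x0 := by
      linear_combination x0 * hsx0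
    set M : ℝ := (d1 + s) / (2 * Real.sqrt (2 * Real.pi))
        * Real.exp (-(d1 - s) ^ 2 / (8 * d2 ^ 2)) with hMdef
    have hval : d1 - d2 * x0 = (d1 + s) / 2 := by
      have : 2 * (d1 - d2 * x0) = 2 * d1 - 2 * d2 * x0 := by ring
      nlinarith [h2d2x0]
    have hMeq : |d1 - d2 * x0| * gaussPdf x0 = M := by
      rw [hval, abs_of_nonneg (by positivity), gaussPdf, hexp, hMdef]
      ring
    have key : ∀ x : ℝ, |d1 - d2 * x| * gaussPdf x ≤ M := by
      intro x
      have ht : 1 + (x ^ 2 - x0 ^ 2) / 2 ≤ Real.exp ((x ^ 2 - x0 ^ 2) / 2) := by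
        have := Real.add_one_le_exp ((x ^ 2 - x0 ^ 2) / 2)
        linarith
      have hq : |d1 - d2 * x| ≤ (d1 + s) / 2 * (1 + (x ^ 2 - x0 ^ 2) / 2) := by
        rw [abs_le]
        constructor
        · nlinarith [mul_nonneg hd1s.le (sq_nonneg (x + x0)), h2d2x0, hsx0, hsx0sq, h1]
        · nlinarith [mul_nonneg hd1s.le (sq_nonneg (x - x0)), h2d2x0, hsx0, hsx0sq, h1]
      have hstep : |d1 - d2 * x| * Real.exp (-x ^ 2 / 2)
          ≤ (d1 + s) / 2 * Real.exp (-x0 ^ 2 / 2) := by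
        calc |d1 - d2 * x| * Real.exp (-x ^ 2 / 2)
            ≤ ((d1 + s) / 2 * (1 + (x ^ 2 - x0 ^ 2) / 2)) * Real.exp (-x ^ 2 / 2) :=
              mul_le_mul_of_nonneg_right hq (Real.exp_nonneg _)
          _ ≤ ((d1 + s) / 2 * Real.exp ((x ^ 2 - x0 ^ 2) / 2)) * Real.exp (-x ^ 2 / 2) := by
              have := mul_le_mul_of_nonneg_left ht (by positivity : (0:ℝ) ≤ (d1 + s) / 2)
              exact mul_le_mul_of_nonneg_right this (Real.exp_nonneg _)
          _ = (d1 + s) / 2 * Real.exp (-x0 ^ 2 / 2) := by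
              rw [mul_assoc, ← Real.exp_add]
              ring_nf
      rw [gaussPdf, hMdef, ← hexp]
      calc |d1 - d2 * x| * ((Real.sqrt (2 * Real.pi))⁻¹ * Real.exp (-x ^ 2 / 2))
          = (Real.sqrt (2 * Real.pi))⁻¹ * (|d1 - d2 * x| * Real.exp (-x ^ 2 / 2)) := by ring
        _ ≤ (Real.sqrt (2 * Real.pi))⁻¹ * ((d1 + s) / 2 * Real.exp (-x0 ^ 2 / 2)) := by
            exact mul_le_mul_of_nonneg_left hstep (by positivity)
        _ = (d1 + s) / (2 * Real.sqrt (2 * Real.pi)) * Real.exp (-x0 ^ 2 / 2) := by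
            field_simp
      
    have hbdd : BddAbove (Set.range fun x : ℝ => |d1 - d2 * x| * gaussPdf x) := by
      refine ⟨M, ?_⟩
      rintro _ ⟨x, rfl⟩
      exact key x
    apply le_antisymm (ciSup_le key)
    calc M = |d1 - d2 * x0| * gaussPdf x0 := hMeq.symm
      _ ≤ ⨆ x : ℝ, |d1 - d2 * x| * gaussPdf x := le_ciSup hbdd x0
  · intro hd2
    subst hd2
    have hd1 : 0 < d1 := by nlinarith
    have key : ∀ x : ℝ, |d1 - 0 * x| * gaussPdf x ≤ d1 / Real.sqrt (2 * Real.pi) := by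
      intro x
      have habs : |d1 - 0 * x| = d1 := by rw [zero_mul, sub_zero, abs_of_nonneg h1]
      rw [habs, gaussPdf]
      have hle : Real.exp (-x ^ 2 / 2) ≤ 1 := Real.exp_le_one_iff.2 (by nlinarith [sq_nonneg x])
      calc d1 * ((Real.sqrt (2 * Real.pi))⁻¹ * Real.exp (-x ^ 2 / 2))
          ≤ d1 * ((Real.sqrt (2 * Real.pi))⁻¹ * 1) := by
            apply mul_le_mul_of_nonneg_left _ hd1.le
            exact mul_le_mul_of_nonneg_left hle (by positivity)
        _ = d1 / Real.sqrt (2 * Real.pi) := by field_simp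
    have hbdd : BddAbove (Set.range fun x : ℝ => |d1 - 0 * x| * gaussPdf x) := by
      refine ⟨d1 / Real.sqrt (2 * Real.pi), ?_⟩
      rintro _ ⟨x, rfl⟩
      exact key x
    apply le_antisymm (ciSup_le key)
    have h0 : |d1 - 0 * 0| * gaussPdf 0 = d1 / Real.sqrt (2 * Real.pi) := by
      simp [gaussPdf, abs_of_nonneg h1, div_eq_mul_inv]
    calc d1 / Real.sqrt (2 * Real.pi) = |d1 - 0 * 0| * gaussPdf 0 := h0.symm
      _ ≤ ⨆ x : ℝ, |d1 - 0 * x| * gaussPdf x := le_ciSup hbdd 0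
end

section
/- Let h, v > 0 with h sufficiently large and (4/h) log h ≤ v. Then ∫_0^v (1 / (√s (h + s))) e^{−(h+s)²/2} ds = √(π/h³) · e^{−h²/2} · (1 + O(h^{−2})). More precisely, there exist constants C, h₀ > 0 such that for all h ≥ h₀ and all v ≥ (4/h) log h, |∫_0^v (√s (h+s))^{−1} e^{−(h+s)²/2} ds − √π h^{−3/2} e^{−h²/2}| ≤ C h^{−7/2} e^{−h²/2}. -/
open Real MeasureTheory Set

lemma aux_int {p : ℝ} (b : ℝ) (hp : -1 < p) (hb : 0 < b) :
    IntegrableOn (fun s : ℝ => s ^ p * Real.exp (-(b * s))) (Set.Ioi 0) := by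
  have := integrableOn_rpow_mul_exp_neg_mul_rpow hp zero_lt_one hb
  simpa [Real.rpow_one, neg_mul] using this

lemma aux_val {p : ℝ} (b : ℝ) (hp : -1 < p) (hb : 0 < b) :
    ∫ s in Set.Ioi (0:ℝ), s ^ p * Real.exp (-(b * s)) = (1/b) ^ (p+1) * Real.Gamma (p+1) := by
  have := Real.integral_rpow_mul_exp_neg_mul_Ioi (show 0 < p+1 by linarith) hb
  simpa using this

lemma core_ineq {h s : ℝ} (hp : 0 < h) (hs : 0 < s) :
    h⁻¹ - s / h^2 - s^2/(2*h) ≤ (h+s)⁻¹ * Real.exp (-(s^2/2)) := by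
  have hE : 1 - s^2/2 ≤ Real.exp (-(s^2/2)) := by
    have := Real.add_one_le_exp (-(s^2/2)); linarith
  have hhs : 0 < h + s := by linarith
  rw [← sub_nonneg]
  have expand : (h+s)⁻¹ * Real.exp (-(s^2/2)) - (h⁻¹ - s / h^2 - s^2/(2*h))
      = (h^2 * Real.exp (-(s^2/2)) - (h+s)*(h - s - h*s^2/2)) / (h^2*(h+s)) := by
    field_simp
  rw [expand]
  apply div_nonneg _ (by positivity)
  nlinarith [mul_le_mul_of_nonneg_left hE (sq_nonneg h), sq_nonneg s,
    mul_nonneg (mul_nonneg hp.le hs.le) (mul_nonneg hs.le hs.le)]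

section
variable {h v : ℝ}

set_option maxHeartbeats 1000000 in
lemma key (hh : 3 ≤ h) (hv : (4 / h) * Real.log h ≤ v) :
    |(∫ s in Set.Ioo (0:ℝ) v,
        (Real.sqrt s * (h + s))⁻¹ * Real.exp (-(h * s) - s^2/2))
      - Real.sqrt Real.pi * h ^ (-(3:ℝ)/2)| ≤ 4 * h ^ (-(7:ℝ)/2) := by
  have hp0 : (0:ℝ) < h := by linarith
  have hlog : 1 ≤ Real.log h := by
    rw [← Real.log_exp 1]
    exact Real.log_le_log (Real.exp_pos 1) (by nlinarith [Real.exp_one_lt_d9])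
  have hv0 : 0 < v := lt_of_lt_of_le (by positivity) hv
  have hv1 : 1/h ≤ v := le_trans (by
    rw [div_mul_eq_mul_div]
    exact (div_le_div_iff_of_pos_right hp0).mpr (by linarith)) hv
  have hhv : 4 * Real.log h ≤ h * v := by
    have h2 := mul_le_mul_of_nonneg_left hv hp0.le
    rw [show h * (4/h*Real.log h) = 4 * Real.log h by field_simp] at h2
    exact h2
  set U : ℝ → ℝ := fun s => s ^ (-(1:ℝ)/2) * Real.exp (-(h * s)) with hU
  set V : ℝ → ℝ := fun s => s ^ ((1:ℝ)/2) * Real.exp (-(h * s)) with hVdef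
  set W : ℝ → ℝ := fun s => s ^ ((3:ℝ)/2) * Real.exp (-(h * s)) with hWdef
  set G : ℝ → ℝ := fun s => (Real.sqrt s * (h + s))⁻¹ * Real.exp (-(h * s) - s^2/2) with hGdef
  set L : ℝ → ℝ := fun s => h⁻¹ * U s - (h^2)⁻¹ * V s - (2*h)⁻¹ * W s with hLdef
  -- pointwise facts
  have hsr : ∀ s : ℝ, 0 < s → s ^ (-(1:ℝ)/2) = (Real.sqrt s)⁻¹ := by
    intro s hs
    rw [Real.sqrt_eq_rpow, ← Real.rpow_neg hs.le]
    norm_num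
  have hGU : ∀ s : ℝ, 0 < s → G s ≤ h⁻¹ * U s := by
    intro s hs
    have hsq : 0 < Real.sqrt s := Real.sqrt_pos.mpr hs
    have h1 : (Real.sqrt s * (h + s))⁻¹ ≤ (Real.sqrt s * h)⁻¹ := by
      apply inv_anti₀ (by positivity)
      exact mul_le_mul_of_nonneg_left (by linarith) hsq.le
    have h2 : Real.exp (-(h * s) - s^2/2) ≤ Real.exp (-(h * s)) :=
      Real.exp_le_exp.mpr (by nlinarith [sq_nonneg s])
    calc G s ≤ (Real.sqrt s * h)⁻¹ * Real.exp (-(h * s)) :=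
          mul_le_mul h1 h2 (Real.exp_pos _).le (by positivity)
      _ = h⁻¹ * U s := by
          simp only [hU, hsr s hs, mul_inv]; ring
  have hGpos : ∀ s : ℝ, 0 < s → 0 ≤ G s := by
    intro s hs
    have hsq : 0 < Real.sqrt s := Real.sqrt_pos.mpr hs
    have : 0 < Real.sqrt s * (h + s) := by positivity
    positivity
  have hLG : ∀ s : ℝ, 0 < s → L s ≤ G s := by
    intro s hs
    have hsq : 0 < Real.sqrt s := Real.sqrt_pos.mpr hs
    have r1 : s ^ ((1:ℝ)/2) = s * s ^ (-(1:ℝ)/2) := by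
      rw [show (1:ℝ)/2 = 1 + (-(1:ℝ)/2) by norm_num, Real.rpow_add hs, Real.rpow_one]
    have r2 : s ^ ((3:ℝ)/2) = s^2 * s ^ (-(1:ℝ)/2) := by
      rw [show (3:ℝ)/2 = 2 + (-(1:ℝ)/2) by norm_num, Real.rpow_add hs]
      norm_num [Real.rpow_two]
    have hLs : L s = ((Real.sqrt s)⁻¹ * Real.exp (-(h * s))) *
        (h⁻¹ - s / h^2 - s^2/(2*h)) := by
      simp only [hLdef, hU, hVdef, hWdef, r1, r2, hsr s hs]
      ring
    have hGs : G s = ((Real.sqrt s)⁻¹ * Real.exp (-(h * s))) *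
        ((h+s)⁻¹ * Real.exp (-(s^2/2))) := by
      simp only [hGdef, mul_inv]
      rw [show -(h * s) - s^2/2 = -(h*s) + -(s^2/2) by ring, Real.exp_add]
      ring
    rw [hLs, hGs]
    exact mul_le_mul_of_nonneg_left (core_ineq hp0 hs) (by positivity)
  -- integrability
  have hUi : IntegrableOn U (Set.Ioi 0) := by rw [hU]; exact aux_int h (by norm_num) hp0
  have hVi : IntegrableOn V (Set.Ioi 0) := by rw [hVdef]; exact aux_int h (by norm_num) hp0
  have hWi : IntegrableOn W (Set.Ioi 0) := by rw [hWdef]; exact aux_int h (by norm_num) hp0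
  have hLi : IntegrableOn L (Set.Ioi 0) :=
    ((hUi.const_mul _).sub (hVi.const_mul _)).sub (hWi.const_mul _)
  have hGm : AEStronglyMeasurable G (volume.restrict (Set.Ioo 0 v)) := by
    apply Measurable.aestronglyMeasurable
    rw [hGdef]; fun_prop
  have hUiIoi : IntegrableOn (fun s => h⁻¹ * U s) (Set.Ioi 0) := hUi.const_mul _
  have hUiIoo : IntegrableOn (fun s => h⁻¹ * U s) (Set.Ioo 0 v) :=
    hUiIoi.mono_set Set.Ioo_subset_Ioi_self
  have hGi : IntegrableOn G (Set.Ioo 0 v) := by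
    apply Integrable.mono' hUiIoo hGm
    filter_upwards [ae_restrict_mem measurableSet_Ioo] with s hs
    rw [Real.norm_eq_abs, abs_of_nonneg (hGpos s hs.1)]
    exact hGU s hs.1
  -- rpow bookkeeping
  set x : ℝ := h ^ (-(1:ℝ)/2) with hxdef
  have hx : 0 < x := Real.rpow_pos_of_pos hp0 _
  have hxpow : ∀ n : ℕ, h ^ (-(n:ℝ)/2) = x ^ n := by
    intro n
    rw [hxdef, ← Real.rpow_natCast (h ^ (-(1:ℝ)/2)) n, ← Real.rpow_mul hp0.le]
    ring_nf
  have x2 : h⁻¹ = x^2 := by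
    have := hxpow 2; norm_num at this
    rw [← Real.rpow_neg_one h, ← this]
  have x3 : h ^ (-(3:ℝ)/2) = x^3 := by
    have := hxpow 3; norm_num at this; rw [← this]; norm_num
  have x4 : (h^2)⁻¹ = x^4 := by
    have := hxpow 4; norm_num at this
    rw [← this]
  have x7 : h ^ (-(7:ℝ)/2) = x^7 := by
    have := hxpow 7; norm_num at this; rw [← this]; norm_num
  have x2h : (2*h)⁻¹ = x^2/2 := by rw [mul_inv, x2]; ring
  have hrw : ∀ a : ℝ, ((1:ℝ)/h) ^ a = h ^ (-a) := fun a => by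
    rw [one_div, Real.inv_rpow hp0.le, ← Real.rpow_neg hp0.le]
  have hsqpi : Real.sqrt Real.pi ≤ 2 := by
    rw [show (2:ℝ) = Real.sqrt 4 by
      rw [show (4:ℝ) = 2^2 by norm_num, Real.sqrt_sq (by norm_num)]]
    exact Real.sqrt_le_sqrt Real.pi_le_four
  -- integral values
  have hIU : ∫ s in Set.Ioi (0:ℝ), U s = x * Real.sqrt Real.pi := by
    rw [hU, aux_val h (by norm_num) hp0,
      show -(1:ℝ)/2 + 1 = 1/2 by norm_num, Real.Gamma_one_half_eq, hrw,
      show -((1:ℝ)/2) = -(1:ℝ)/2 by norm_num]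
  have hIV : ∫ s in Set.Ioi (0:ℝ), V s = x^3 * (1/2 * Real.sqrt Real.pi) := by
    rw [hVdef, aux_val h (by norm_num) hp0,
      show (1:ℝ)/2 + 1 = 3/2 by norm_num, hrw,
      show -((3:ℝ)/2) = -(3:ℝ)/2 by norm_num, x3,
      show (3:ℝ)/2 = 1/2 + 1 by norm_num,
      Real.Gamma_add_one (by norm_num), Real.Gamma_one_half_eq]
  have hIW : ∫ s in Set.Ioi (0:ℝ), W s = x^5 * (3/4 * Real.sqrt Real.pi) := by
    rw [hWdef, aux_val h (by norm_num) hp0,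
      show (3:ℝ)/2 + 1 = 5/2 by norm_num, hrw,
      show -((5:ℝ)/2) = -(5:ℝ)/2 by norm_num,
      (by have := hxpow 5; norm_num at this; rw [← this]; norm_num : h ^ (-(5:ℝ)/2) = x^5),
      show (5:ℝ)/2 = 3/2 + 1 by norm_num,
      Real.Gamma_add_one (by norm_num),
      show (3:ℝ)/2 = 1/2 + 1 by norm_num,
      Real.Gamma_add_one (by norm_num), Real.Gamma_one_half_eq]
    ring
  have hIL : ∫ s in Set.Ioi (0:ℝ), L s
      = Real.sqrt Real.pi * x^3 - 7/8 * Real.sqrt Real.pi * x^7 := by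
    have i1 : IntegrableOn (fun s => h⁻¹ * U s - (h ^ 2)⁻¹ * V s) (Set.Ioi 0) := by
      exact (hUi.const_mul _).sub (hVi.const_mul _)
    have i2 : IntegrableOn (fun s => (2*h)⁻¹ * W s) (Set.Ioi 0) := hWi.const_mul _
    have i3 : IntegrableOn (fun s => (h ^ 2)⁻¹ * V s) (Set.Ioi 0) := hVi.const_mul _
    simp only [hLdef]
    rw [integral_sub i1 i2, integral_sub hUiIoi i3,
      integral_const_mul, integral_const_mul, integral_const_mul, hIU, hIV, hIW,
      x2, x4, x2h]
    ring
  -- upper bound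
  have hupper : (∫ s in Set.Ioo (0:ℝ) v, G s) ≤ Real.sqrt Real.pi * x^3 := by
    calc (∫ s in Set.Ioo (0:ℝ) v, G s)
        ≤ ∫ s in Set.Ioo (0:ℝ) v, h⁻¹ * U s :=
          setIntegral_mono_on hGi hUiIoo measurableSet_Ioo (fun s hs => hGU s hs.1)
      _ ≤ ∫ s in Set.Ioi (0:ℝ), h⁻¹ * U s := by
          apply setIntegral_mono_set hUiIoi
          · filter_upwards [ae_restrict_mem measurableSet_Ioi] with s hs
            have hs0 : (0:ℝ) < s := hs
            exact mul_nonneg (inv_nonneg.mpr hp0.le)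
              (mul_nonneg (Real.rpow_nonneg hs0.le _) (Real.exp_pos _).le)
          · exact (Set.Ioo_subset_Ioi_self).eventuallyLE
      _ = Real.sqrt Real.pi * x^3 := by
          rw [integral_const_mul, hIU, x2]; ring
  -- splitting
  have hLiIoo : IntegrableOn L (Set.Ioo 0 v) := hLi.mono_set Set.Ioo_subset_Ioi_self
  have hLiIoiv : IntegrableOn L (Set.Ioi v) := hLi.mono_set (Set.Ioi_subset_Ioi hv0.le)
  have hsplit : (∫ s in Set.Ioo (0:ℝ) v, L s)
      = (∫ s in Set.Ioi (0:ℝ), L s) - ∫ s in Set.Ioi v, L s := by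
    have hunion : Set.Ioc (0:ℝ) v ∪ Set.Ioi v = Set.Ioi 0 := Set.Ioc_union_Ioi_eq_Ioi hv0.le
    rw [← hunion, setIntegral_union (Set.Ioc_disjoint_Ioi le_rfl) measurableSet_Ioi
      (hLi.mono_set Set.Ioc_subset_Ioi_self) hLiIoiv,
      MeasureTheory.integral_Ioc_eq_integral_Ioo]
    ring
  -- tail bound
  set c : ℝ := h⁻¹ * (Real.sqrt v)⁻¹ * Real.exp (-(h*v/2)) with hcdef
  have hEi : IntegrableOn (fun s : ℝ => Real.exp (-(h/2 * s))) (Set.Ioi 0) := by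
    have := aux_int (p := 0) (h/2) (by norm_num) (by positivity)
    simpa [Real.rpow_zero] using this
  have hEval : ∫ s in Set.Ioi (0:ℝ), Real.exp (-(h/2 * s)) = 2/h := by
    have := aux_val (p := 0) (h/2) (by norm_num) (by positivity)
    simpa [Real.rpow_zero, Real.Gamma_one, Real.rpow_one, one_div_div] using this
  have htail1 : ∀ s ∈ Set.Ioi v, L s ≤ h⁻¹ * U s := by
    intro s hs
    have hs0 : 0 < s := lt_trans hv0 hs
    have hV0 : 0 ≤ V s := mul_nonneg (Real.rpow_nonneg hs0.le _) (Real.exp_pos _).le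
    have hW0 : 0 ≤ W s := mul_nonneg (Real.rpow_nonneg hs0.le _) (Real.exp_pos _).le
    have h1 : 0 ≤ (h^2)⁻¹ * V s := mul_nonneg (inv_nonneg.mpr (sq_nonneg h)) hV0
    have h2 : 0 ≤ (2*h)⁻¹ * W s :=
      mul_nonneg (inv_nonneg.mpr (by positivity : (0:ℝ) ≤ 2*h)) hW0
    simp only [hLdef]
    linarith
  have htail2 : ∀ s ∈ Set.Ioi v, h⁻¹ * U s ≤ c * Real.exp (-(h/2 * s)) := by
    intro s hs
    have hsv : v < s := hs
    have hs0 : 0 < s := lt_trans hv0 hsv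
    have e1 : s ^ (-(1:ℝ)/2) ≤ (Real.sqrt v)⁻¹ := by
      rw [hsr s hs0]
      exact inv_anti₀ (Real.sqrt_pos.mpr hv0) (Real.sqrt_le_sqrt hsv.le)
    have e2 : Real.exp (-(h*s)) ≤ Real.exp (-(h*v/2)) * Real.exp (-(h/2*s)) := by
      rw [← Real.exp_add]
      apply Real.exp_le_exp.mpr
      nlinarith [mul_le_mul_of_nonneg_left hsv.le hp0.le]
    calc h⁻¹ * U s = h⁻¹ * (s ^ (-(1:ℝ)/2) * Real.exp (-(h*s))) := rfl
      _ ≤ h⁻¹ * ((Real.sqrt v)⁻¹ * (Real.exp (-(h*v/2)) * Real.exp (-(h/2*s)))) := by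
          apply mul_le_mul_of_nonneg_left _ (inv_nonneg.mpr hp0.le)
          apply mul_le_mul e1 e2 (Real.exp_pos _).le (by positivity)
      _ = c * Real.exp (-(h/2 * s)) := by rw [hcdef]; ring
  have hsh : Real.sqrt h = x⁻¹ := by
    rw [hxdef, show -(1:ℝ)/2 = -((1:ℝ)/2) by norm_num, Real.rpow_neg hp0.le, inv_inv,
      Real.sqrt_eq_rpow]
  have e4 : Real.exp (-(h*v/2)) ≤ (h^2)⁻¹ := by
    rw [show ((h^2)⁻¹ : ℝ) = Real.exp (Real.log ((h^2)⁻¹)) from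
      (Real.exp_log (by positivity)).symm]
    apply Real.exp_le_exp.mpr
    rw [Real.log_inv, Real.log_pow]
    push_cast
    linarith
  have e5 : (Real.sqrt v)⁻¹ ≤ Real.sqrt h := by
    have h1 : Real.sqrt (1/h) ≤ Real.sqrt v := Real.sqrt_le_sqrt hv1
    have h2 : (0:ℝ) < Real.sqrt (1/h) := Real.sqrt_pos.mpr (by positivity)
    have := inv_anti₀ h2 h1
    rwa [one_div, Real.sqrt_inv, inv_inv] at this
  have hc5 : c ≤ x^5 := by
    have step : c ≤ h⁻¹ * Real.sqrt h * (h^2)⁻¹ := by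
      rw [hcdef]
      apply mul_le_mul _ e4 (Real.exp_pos _).le (by positivity)
      exact mul_le_mul_of_nonneg_left e5 (inv_nonneg.mpr hp0.le)
    calc c ≤ h⁻¹ * Real.sqrt h * (h^2)⁻¹ := step
      _ = x^5 := by
          rw [x2, hsh, x4]
          field_simp
  have htail : (∫ s in Set.Ioi v, L s) ≤ 2 * x^7 := by
    have hEc : IntegrableOn (fun s => c * Real.exp (-(h/2 * s))) (Set.Ioi 0) := hEi.const_mul _
    calc (∫ s in Set.Ioi v, L s)
        ≤ ∫ s in Set.Ioi v, c * Real.exp (-(h/2 * s)) := by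
          apply setIntegral_mono_on hLiIoiv (hEc.mono_set (Set.Ioi_subset_Ioi hv0.le))
            measurableSet_Ioi
          intro s hs
          exact le_trans (htail1 s hs) (htail2 s hs)
      _ ≤ ∫ s in Set.Ioi (0:ℝ), c * Real.exp (-(h/2 * s)) := by
          apply setIntegral_mono_set hEc
          · filter_upwards with s
            have hc0 : 0 ≤ c := by rw [hcdef]; positivity
            positivity
          · exact (Set.Ioi_subset_Ioi hv0.le).eventuallyLE
      _ = c * (2/h) := by rw [integral_const_mul, hEval]
      _ ≤ x^5 * (2/h) := mul_le_mul_of_nonneg_right hc5 (by positivity)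
      _ = 2 * x^7 := by rw [div_eq_mul_inv, x2]; ring
  -- assembly
  have hlower : Real.sqrt Real.pi * x^3 - 4 * x^7 ≤ ∫ s in Set.Ioo (0:ℝ) v, G s := by
    have h1 : (∫ s in Set.Ioo (0:ℝ) v, L s) ≤ ∫ s in Set.Ioo (0:ℝ) v, G s :=
      setIntegral_mono_on hLiIoo hGi measurableSet_Ioo (fun s hs => hLG s hs.1)
    rw [hsplit, hIL] at h1
    have hx7 : 0 < x^7 := by positivity
    nlinarith [htail, hsqpi, hx7, h1]
  rw [x3, x7, abs_le]
  constructor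
  · linarith
  · have : (0:ℝ) < 4 * x^7 := by positivity
    linarith

theorem stmt_14 :
    ∃ C h₀ : ℝ, 0 < C ∧ 0 < h₀ ∧
      ∀ h : ℝ, h₀ ≤ h → ∀ v : ℝ, (4 / h) * Real.log h ≤ v →
        |(∫ s in Set.Ioo (0:ℝ) v,
              (Real.sqrt s * (h + s))⁻¹ * Real.exp (-(h + s) ^ 2 / 2))
            - Real.sqrt Real.pi * h ^ (-(3:ℝ)/2) * Real.exp (-h ^ 2 / 2)|
          ≤ C * h ^ (-(7:ℝ)/2) * Real.exp (-h ^ 2 / 2) := by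
  refine ⟨4, 3, by norm_num, by norm_num, ?_⟩
  intro h hh v hv
  have hfact : (∫ s in Set.Ioo (0:ℝ) v,
        (Real.sqrt s * (h + s))⁻¹ * Real.exp (-(h + s) ^ 2 / 2))
      = Real.exp (-h^2/2) * ∫ s in Set.Ioo (0:ℝ) v,
        (Real.sqrt s * (h + s))⁻¹ * Real.exp (-(h * s) - s^2/2) := by
    rw [← integral_const_mul]
    refine setIntegral_congr_fun measurableSet_Ioo (fun s hs => ?_)
    rw [show -(h + s) ^ 2 / 2 = -h^2/2 + (-(h * s) - s^2/2) by ring, Real.exp_add]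
    ring
  have hkey := key hh hv
  have hexp : 0 < Real.exp (-h^2/2) := Real.exp_pos _
  rw [hfact, show Real.exp (-h^2/2) * (∫ s in Set.Ioo (0:ℝ) v,
        (Real.sqrt s * (h + s))⁻¹ * Real.exp (-(h * s) - s^2/2))
      - Real.sqrt Real.pi * h ^ (-(3:ℝ)/2) * Real.exp (-h ^ 2 / 2)
      = ((∫ s in Set.Ioo (0:ℝ) v,
        (Real.sqrt s * (h + s))⁻¹ * Real.exp (-(h * s) - s^2/2))
        - Real.sqrt Real.pi * h ^ (-(3:ℝ)/2)) * Real.exp (-h^2/2) by ring,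
    abs_mul, abs_of_pos hexp]
  calc _ ≤ (4 * h ^ (-(7:ℝ)/2)) * Real.exp (-h^2/2) :=
        mul_le_mul_of_nonneg_right hkey hexp.le
    _ = 4 * h ^ (-(7:ℝ)/2) * Real.exp (-h ^ 2 / 2) := by ring

end
end
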